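/- arXiv:1903.04039 — 7 statements merged into one kernel-verified Lean document; each statement's English description precedes it below -/
import Mathlib

section
/- Let D be a correct certified dec-DNNF on variables X. Then F(D) ⇒ D, i.e., every assignment satisfying the conjunction of the clauses labeling the 0-sinks of D also satisfies the Boolean function computed by D. -/
/-- A clause over `X`: a finite set of literals, a literal `(x, b)` being
satisfied by `τ` when `τ x = b`. -/
def ClauseSat {X : Type} (τ : X → Bool) (C : Finset (X × Bool)) : Prop :=
  ∃ l ∈ C, τ l.1 = l.2

/-- A CNF: a finite set of clauses, all of which must be satisfied. -/
def CnfSat {X : Type} (τ : X → Bool) (F : Finset (Finset (X × Bool))) : Prop :=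
  ∀ C ∈ F, ClauseSat τ C

instance {X : Type} (τ : X → Bool) (C : Finset (X × Bool)) : Decidable (ClauseSat τ C) := by
  unfold ClauseSat; infer_instance

instance {X : Type} (τ : X → Bool) (F : Finset (Finset (X × Bool))) : Decidable (CnfSat τ F) := by
  unfold CnfSat; infer_instance
/-- A certified dec-DNNF: 1-sinks, 0-sinks labeled by a clause, decision nodes
and ∧-nodes. -/
inductive CDNNF (X : Type) where
  | one : CDNNF X
  | zero : Finset (X × Bool) → CDNNF X
  | node : X → CDNNF X → CDNNF X → CDNNF X
  | conj : CDNNF X → CDNNF X → CDNNF X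

/-- Source-sink paths of a certified dec-DNNF. -/
inductive CPath {X : Type} : CDNNF X → Type where
  | one : CPath .one
  | zero (C : Finset (X × Bool)) : CPath (.zero C)
  | dec0 {x f0 f1} : CPath f0 → CPath (.node x f0 f1)
  | dec1 {x f0 f1} : CPath f1 → CPath (.node x f0 f1)
  | left {f g} : CPath f → CPath (.conj f g)
  | right {f g} : CPath g → CPath (.conj f g)

/-- Compatibility of a path with an assignment. -/
def CPath.compat {X : Type} (τ : X → Bool) : {D : CDNNF X} → CPath D → Prop
  | _, .one => True
  | _, .zero _ => True
  | _, @CPath.dec0 _ x _ _ p => τ x = false ∧ CPath.compat τ p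
  | _, @CPath.dec1 _ x _ _ p => τ x = true ∧ CPath.compat τ p
  | _, .left p => CPath.compat τ p
  | _, .right p => CPath.compat τ p

/-- The decisions (variable, edge label) taken along a path. -/
def CPath.testedList {X : Type} : {D : CDNNF X} → CPath D → List (X × Bool)
  | _, .one => []
  | _, .zero _ => []
  | _, @CPath.dec0 _ x _ _ p => (x, false) :: CPath.testedList p
  | _, @CPath.dec1 _ x _ _ p => (x, true) :: CPath.testedList p
  | _, .left p => CPath.testedList p
  | _, .right p => CPath.testedList p

/-- `some C` if the path ends in a 0-sink labeled `C`, `none` if it ends in a 1-sink. -/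
def CPath.endClause {X : Type} : {D : CDNNF X} → CPath D → Option (Finset (X × Bool))
  | _, .one => none
  | _, .zero C => some C
  | _, .dec0 p => CPath.endClause p
  | _, .dec1 p => CPath.endClause p
  | _, .left p => CPath.endClause p
  | _, .right p => CPath.endClause p

/-- Correctness: any assignment reaching a 0-sink via a compatible path
falsifies the clause labeling that sink. -/
def CDNNF.Correct {X : Type} (D : CDNNF X) : Prop :=
  ∀ (τ : X → Bool) (P : CPath D) (C : Finset (X × Bool)),
    P.compat τ → P.endClause = some C → ¬ ClauseSat τ C

/-- `τ` satisfies `D` (path semantics): every compatible source-sink path ends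
in a 1-sink. -/
def CDNNF.PathSat {X : Type} (τ : X → Bool) (D : CDNNF X) : Prop :=
  ∀ P : CPath D, P.compat τ → P.endClause = none

/-- The set of clauses labeling the 0-sinks of `D`. -/
def CDNNF.zeroClauses {X : Type} [DecidableEq X] : CDNNF X → Finset (Finset (X × Bool))
  | .one => ∅
  | .zero C => {C}
  | .node _ f0 f1 => f0.zeroClauses ∪ f1.zeroClauses
  | .conj f g => f.zeroClauses ∪ g.zeroClauses

/-- Recursive (circuit) semantics of a certified dec-DNNF. -/
def CDNNF.eval {X : Type} : CDNNF X → (X → Bool) → Bool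
  | .one, _ => true
  | .zero _, _ => false
  | .node x f0 f1, τ => cond (τ x) (f1.eval τ) (f0.eval τ)
  | .conj f g, τ => f.eval τ && g.eval τ

lemma endClause_mem_zeroClauses {X : Type} [DecidableEq X] :
    ∀ {D : CDNNF X} (P : CPath D) (C : Finset (X × Bool)),
      P.endClause = some C → C ∈ D.zeroClauses := by
  intro D P
  induction P with
  | one => simp [CPath.endClause]
  | zero C' => intro C h; simp [CPath.endClause] at h; simp [CDNNF.zeroClauses, h]
  | dec0 p ih => intro C h; exact Finset.mem_union_left _ (ih C h)
  | dec1 p ih => intro C h; exact Finset.mem_union_right _ (ih C h)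
  | left p ih => intro C h; exact Finset.mem_union_left _ (ih C h)
  | right p ih => intro C h; exact Finset.mem_union_right _ (ih C h)

/-- for a correct certified dec-DNNF `D`, `F(D) ⇒ D`. -/
theorem stmt1 {X : Type} [DecidableEq X] (D : CDNNF X) (hD : D.Correct)
    (τ : X → Bool) (hF : ∀ C ∈ D.zeroClauses, ClauseSat τ C) :
    D.PathSat τ := by
  intro P hc
  cases h : P.endClause with
  | none => rfl
  | some C =>
    exact absurd (hF C (endClause_mem_zeroClauses P C h)) (hD τ P C hc h)
end

section
/- Let F be a CNF formula and D a correct certified dec-DNNF such that every clause labeling a 0-sink of D is a clause of F. Then F ⇒ D, i.e., every satisfying assignment of F satisfies D. -/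
/-- if every 0-sink clause of a correct certified dec-DNNF `D`
is a clause of the CNF `F`, then `F ⇒ D`. -/
theorem stmt2 {X : Type} [DecidableEq X] (F : Finset (Finset (X × Bool)))
    (D : CDNNF X) (hD : D.Correct) (hsub : D.zeroClauses ⊆ F)
    (τ : X → Bool) (hF : CnfSat τ F) :
    D.PathSat τ := by
  intro P hc
  cases h : P.endClause with
  | none => rfl
  | some C =>
    exact absurd (hF C (hsub (endClause_mem_zeroClauses P C h))) (hD τ P C hc h)
end

section
/- A certified dec-DNNF D is not correct if and only if there exists a 0-sink α, a literal ℓ of C_α, and a source-to-α path P such that either the variable of ℓ is not tested on P, or P uses the outgoing edge of the decision node on the variable of ℓ corresponding to the value making ℓ true. -/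
/-- a certified dec-DNNF is not correct iff some source-to-0-sink
path `P` ending at a 0-sink labeled `C` and some literal `l ∈ C` are such that
either the variable of `l` is not tested on `P`, or `P` takes the edge
corresponding to the value making `l` true. (See `stmt3` below.) -/

lemma compat_tested {X : Type} (τ : X → Bool) {D : CDNNF X} (P : CPath D)
    (h : P.compat τ) : ∀ p ∈ P.testedList, τ p.1 = p.2 := by
  induction P with
  | one => simp [CPath.testedList]
  | zero C => simp [CPath.testedList]
  | dec0 q ih =>
      obtain ⟨h1, h2⟩ := h
      intro p hp
      rcases (by simpa [CPath.testedList] using hp : p = (_, false) ∨ p ∈ q.testedList) with h' | h'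
      · subst h'; exact h1
      · exact ih h2 p h'
  | dec1 q ih =>
      obtain ⟨h1, h2⟩ := h
      intro p hp
      rcases (by simpa [CPath.testedList] using hp : p = (_, true) ∨ p ∈ q.testedList) with h' | h'
      · subst h'; exact h1
      · exact ih h2 p h'
  | left q ih => exact ih h
  | right q ih => exact ih h

lemma tested_compat {X : Type} (τ : X → Bool) {D : CDNNF X} (P : CPath D)
    (h : ∀ p ∈ P.testedList, τ p.1 = p.2) : P.compat τ := by
  induction P with
  | one => trivial
  | zero C => trivial
  | dec0 q ih =>
      exact ⟨h (_, false) (by simp [CPath.testedList]),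
        ih fun p hp => h p (by simp [CPath.testedList, hp])⟩
  | dec1 q ih =>
      exact ⟨h (_, true) (by simp [CPath.testedList]),
        ih fun p hp => h p (by simp [CPath.testedList, hp])⟩
  | left q ih => exact ih fun p hp => h p hp
  | right q ih => exact ih fun p hp => h p hp

/-- STATEMENT 3 tail -/
theorem stmt3 {X : Type} (D : CDNNF X)
    (hreadonce : ∀ Q : CPath D, ((CPath.testedList Q).map Prod.fst).Nodup) :
    ¬ D.Correct ↔
      ∃ (P : CPath D) (C : Finset (X × Bool)), P.endClause = some C ∧
        ∃ l ∈ C, (l.1 ∉ (CPath.testedList P).map Prod.fst ∨ l ∈ CPath.testedList P) := by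
  classical
  constructor
  · intro hnc
    unfold CDNNF.Correct at hnc
    push_neg at hnc
    obtain ⟨τ, P, C, hcompat, hend, hsat⟩ := hnc
    obtain ⟨l, hlC, hτ⟩ := hsat
    refine ⟨P, C, hend, l, hlC, ?_⟩
    by_cases hmem : l.1 ∈ (CPath.testedList P).map Prod.fst
    · right
      obtain ⟨p, hp, hfst⟩ := List.mem_map.mp hmem
      have h1 := compat_tested τ P hcompat p hp
      have h2 : p = l := by
        obtain ⟨a, b⟩ := p; obtain ⟨c, d⟩ := l
        simp only at hfst h1 hτ
        subst hfst
        simp [h1.symm.trans hτ]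
      rwa [← h2]
    · left; exact hmem
  · rintro ⟨P, C, hend, l, hlC, hl⟩
    intro hcor
    set τ : X → Bool := fun x =>
      if h : ∃ b, (x, b) ∈ P.testedList then h.choose
      else if x = l.1 then l.2 else false with hτdef
    have huniq : ∀ x b, (x, b) ∈ P.testedList → τ x = b := by
      intro x b hb
      have hex : ∃ b, (x, b) ∈ P.testedList := ⟨b, hb⟩
      have heq : (x, hex.choose) = (x, b) :=
        List.inj_on_of_nodup_map (hreadonce P) hex.choose_spec hb rfl
      simp only [hτdef, dif_pos hex]
      exact (Prod.mk.injEq _ _ _ _).mp heq |>.2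
    have hcompat : P.compat τ :=
      tested_compat τ P (fun p hp => huniq p.1 p.2 (by simpa using hp))
    have hτl : τ l.1 = l.2 := by
      rcases hl with hl | hl
      · have hnex : ¬ ∃ b, (l.1, b) ∈ P.testedList := by
          rintro ⟨b, hb⟩
          exact hl (List.mem_map.mpr ⟨(l.1, b), hb, rfl⟩)
        show (if h : ∃ b, (l.1, b) ∈ P.testedList then h.choose
          else if l.1 = l.1 then l.2 else false) = l.2
        rw [dif_neg hnex, if_pos rfl]
      · exact huniq l.1 l.2 (by simpa using hl)
    exact hcor τ P C hcompat hend ⟨l, hlC, hτl⟩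
end

section
/- A certified dec-DNNF D is correct if and only if for every 0-sink α, every literal ℓ of C_α with underlying variable x, and every path P from the source to α, the path P contains a decision node on x and uses the outgoing edge labeled with the value v such that ℓ evaluates to 0 under x ↦ v. -/
lemma tested_of_compat {X : Type} (τ : X → Bool) :
    ∀ {D : CDNNF X} (P : CPath D), P.compat τ → ∀ p ∈ P.testedList, τ p.1 = p.2 := by
  intro D P
  induction P with
  | one => intro _ p hp; simp [CPath.testedList] at hp
  | zero C => intro _ p hp; simp [CPath.testedList] at hp
  | dec0 q ih =>
      intro hc p hp
      rcases hc with ⟨hx, hc⟩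
      rcases List.mem_cons.mp hp with hp | hp
      · simp [hp, hx]
      · exact ih hc p hp
  | dec1 q ih =>
      intro hc p hp
      rcases hc with ⟨hx, hc⟩
      rcases List.mem_cons.mp hp with hp | hp
      · simp [hp, hx]
      · exact ih hc p hp
  | left q ih => intro hc p hp; exact ih hc p hp
  | right q ih => intro hc p hp; exact ih hc p hp

lemma compat_of_tested {X : Type} (τ : X → Bool) :
    ∀ {D : CDNNF X} (P : CPath D), (∀ p ∈ P.testedList, τ p.1 = p.2) → P.compat τ := by
  intro D P
  induction P with
  | one => intro _; trivial
  | zero C => intro _; trivial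
  | dec0 q ih =>
      intro h
      refine ⟨h (_, false) (by simp [CPath.testedList]), ih fun p hp => h p (List.mem_cons_of_mem _ hp)⟩
  | dec1 q ih =>
      intro h
      refine ⟨h (_, true) (by simp [CPath.testedList]), ih fun p hp => h p (List.mem_cons_of_mem _ hp)⟩
  | left q ih => intro h; exact ih h
  | right q ih => intro h; exact ih h

lemma mem_unique_of_nodup {X : Type} {l : List (X × Bool)}
    (hn : (l.map Prod.fst).Nodup) {x : X} {b1 b2 : Bool}
    (h1 : (x, b1) ∈ l) (h2 : (x, b2) ∈ l) : b1 = b2 := by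
  have := List.inj_on_of_nodup_map hn h1 h2 rfl
  exact congrArg Prod.snd this

/-- a certified dec-DNNF is correct iff every path from the source
to a 0-sink labeled `C` tests, for every literal `l ∈ C`, the variable of `l`
and takes the edge labeled with the value falsifying `l`. -/
theorem stmt4 {X : Type} (D : CDNNF X)
    (hreadonce : ∀ Q : CPath D, ((CPath.testedList Q).map Prod.fst).Nodup) :
    D.Correct ↔
      ∀ (P : CPath D) (C : Finset (X × Bool)), P.endClause = some C →
        ∀ l ∈ C, (l.1, !l.2) ∈ CPath.testedList P := by
  constructor
  · intro hcorr P C hC l hl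
    by_contra hne
    classical
    set τ : X → Bool := fun x =>
      if x = l.1 then l.2 else (if (x, true) ∈ P.testedList then true else false) with hτ
    have hagree : ∀ p ∈ P.testedList, τ p.1 = p.2 := by
      rintro ⟨x, b⟩ hp
      simp only [hτ]
      by_cases hx : x = l.1
      · subst hx
        simp only [if_pos rfl]
        by_contra hb
        have : b = !l.2 := by
          cases b <;> cases h2 : l.2 <;> simp_all
        exact hne (by rw [← this]; exact hp)
      · simp only [if_neg hx]
        by_cases ht : (x, true) ∈ P.testedList
        · simp only [if_pos ht]
          cases b with
          | true => rfl
          | false => exact (mem_unique_of_nodup (hreadonce P) hp ht).symm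
        · simp only [if_neg ht]
          cases b with
          | false => rfl
          | true => exact absurd hp ht
    have hcompat := compat_of_tested τ P hagree
    exact hcorr τ P C hcompat hC ⟨l, hl, by simp [hτ]⟩
  · rintro h τ P C hcompat hC ⟨l, hl, hsat⟩
    have hmem := h P C hC l hl
    have := tested_of_compat τ P hcompat _ hmem
    simp only at this
    rw [hsat] at this
    exact absurd this (by cases l.2 <;> simp)
end

section
/- Soundness of the kcps(#SAT) verification procedure: if D is a correct certified dec-DNNF on variables X such that every 0-sink clause of D is a clause of the CNF F, and D ⇒ F (every satisfying assignment of D satisfies F), then D and F compute the same Boolean function. -/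
lemma aux15 {X : Type} [DecidableEq X] (D : CDNNF X) (τ : X → Bool)
    (h : D.eval τ = false) :
    ∃ P : CPath D, P.compat τ ∧ ∃ C, P.endClause = some C ∧ C ∈ D.zeroClauses := by
  induction D with
  | one => simp [CDNNF.eval] at h
  | zero C => exact ⟨.zero C, trivial, C, rfl, by simp [CDNNF.zeroClauses]⟩
  | node x f0 f1 ih0 ih1 =>
    simp only [CDNNF.eval] at h
    cases hx : τ x with
    | false =>
      obtain ⟨P, hc, C, he, hz⟩ := ih0 (by simpa [hx] using h)
      exact ⟨.dec0 P, ⟨hx, hc⟩, C, he, by simp [CDNNF.zeroClauses, hz]⟩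
    | true =>
      obtain ⟨P, hc, C, he, hz⟩ := ih1 (by simpa [hx] using h)
      exact ⟨.dec1 P, ⟨hx, hc⟩, C, he, by simp [CDNNF.zeroClauses, hz]⟩
  | conj f g ihf ihg =>
    simp only [CDNNF.eval, Bool.and_eq_false_iff] at h
    rcases h with h | h
    · obtain ⟨P, hc, C, he, hz⟩ := ihf h
      exact ⟨.left P, hc, C, he, by simp [CDNNF.zeroClauses, hz]⟩
    · obtain ⟨P, hc, C, he, hz⟩ := ihg h
      exact ⟨.right P, hc, C, he, by simp [CDNNF.zeroClauses, hz]⟩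

/-- soundness of the kcps(#SAT) verification: a correct certified
dec-DNNF whose 0-sink clauses are clauses of `F` and which entails `F` computes
the same Boolean function as `F`. -/
theorem stmt15 {X : Type} [DecidableEq X]
    (F : Finset (Finset (X × Bool))) (D : CDNNF X)
    (hcor : D.Correct) (hsub : D.zeroClauses ⊆ F)
    (hDF : ∀ τ : X → Bool, D.eval τ = true → CnfSat τ F) :
    ∀ τ : X → Bool, D.eval τ = true ↔ CnfSat τ F := by
  intro τ
  constructor
  · exact hDF τ
  · intro hF
    by_contra h
    obtain ⟨P, hc, C, he, hz⟩ := aux15 D τ (by simpa using h)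
    exact hcor τ P C hc he (hF C (hsub hz))
end

section
/- Soundness of the kcps(maxSAT) proof system: let F be a CNF on X and F̃ its selector-augmented version over X ∪ S. If D is a correct certified dec-DNNF whose 0-sink clauses are clauses of F̃ and with D ⇒ F̃, then D computes F̃, and M(F) equals the maximum over satisfying assignments τ of D of |{s ∈ S : τ(s) = 1}|. -/
instance {X : Type} [DecidableEq X] (F : Finset (Finset (X × Bool))) :
    DecidableEq (Finset ((X ⊕ {C // C ∈ F}) × Bool)) := fun a b => a.decidableEq b

/-- The clause `C ∨ ¬s_C`, adding a fresh negated selector variable to `C`. -/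
def liftClause {X : Type} [DecidableEq X] (F : Finset (Finset (X × Bool)))
    (C : Finset (X × Bool)) (h : C ∈ F) : Finset ((X ⊕ {C // C ∈ F}) × Bool) :=
  C.image (fun l => (Sum.inl l.1, l.2)) ∪ {(Sum.inr ⟨C, h⟩, false)}

/-- The CNF `F̃ = ⋀_{C ∈ F} (C ∨ ¬s_C)` over `X ∪ S`. -/
def tildeCnf {X : Type} [DecidableEq X] (F : Finset (Finset (X × Bool))) :
    Finset (Finset ((X ⊕ {C // C ∈ F}) × Bool)) :=
  F.attach.image fun c => liftClause F c.1 c.2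

/-- `M(F)`: the maximum number of clauses of `F` simultaneously satisfiable. -/
def maxSatVal {X : Type} [Fintype X] [DecidableEq X]
    (F : Finset (Finset (X × Bool))) : ℕ :=
  Finset.univ.sup fun τ : X → Bool => (F.filter fun C => ClauseSat τ C).card

lemma endClause_mem {X : Type} [DecidableEq X] {D : CDNNF X} (P : CPath D)
    {C : Finset (X × Bool)} (h : P.endClause = some C) : C ∈ D.zeroClauses := by
  induction P with
  | one => simp [CPath.endClause] at h
  | zero C' =>
    simp [CPath.endClause] at h
    subst h; simp [CDNNF.zeroClauses]
  | dec0 p ih => exact Finset.mem_union_left _ (ih h)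
  | dec1 p ih => exact Finset.mem_union_right _ (ih h)
  | left p ih => exact Finset.mem_union_left _ (ih h)
  | right p ih => exact Finset.mem_union_right _ (ih h)

lemma exists_false_path {X : Type} (D : CDNNF X) (σ : X → Bool)
    (h : D.eval σ = false) :
    ∃ P : CPath D, P.compat σ ∧ ∃ C, P.endClause = some C := by
  induction D with
  | one => simp [CDNNF.eval] at h
  | zero C => exact ⟨.zero C, trivial, C, rfl⟩
  | node x f0 f1 ih0 ih1 =>
    cases hx : σ x with
    | false =>
      obtain ⟨P, hc, C, he⟩ := ih0 (by simpa [CDNNF.eval, hx] using h)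
      exact ⟨.dec0 P, ⟨hx, hc⟩, C, he⟩
    | true =>
      obtain ⟨P, hc, C, he⟩ := ih1 (by simpa [CDNNF.eval, hx] using h)
      exact ⟨.dec1 P, ⟨hx, hc⟩, C, he⟩
  | conj f g ihf ihg =>
    simp only [CDNNF.eval, Bool.and_eq_false_iff] at h
    rcases h with h | h
    · obtain ⟨P, hc, C, he⟩ := ihf h
      exact ⟨.left P, hc, C, he⟩
    · obtain ⟨P, hc, C, he⟩ := ihg h
      exact ⟨.right P, hc, C, he⟩

/-- soundness of kcps(maxSAT): a correct certified dec-DNNF whose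
0-sink clauses are clauses of `F̃` and which entails `F̃` computes `F̃`, and
`M(F)` is the maximum number of selectors set to `1` over its satisfying
assignments. -/
theorem stmt18 {X : Type} [Fintype X] [DecidableEq X]
    (F : Finset (Finset (X × Bool))) (D : CDNNF (X ⊕ {C // C ∈ F}))
    (hcor : D.Correct) (hsub : D.zeroClauses ⊆ tildeCnf F)
    (hDF : ∀ σ : (X ⊕ {C // C ∈ F}) → Bool, D.eval σ = true → CnfSat σ (tildeCnf F)) :
    (∀ σ : (X ⊕ {C // C ∈ F}) → Bool, D.eval σ = true ↔ CnfSat σ (tildeCnf F)) ∧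
    maxSatVal F =
      ((Finset.univ.filter fun σ : (X ⊕ {C // C ∈ F}) → Bool => D.eval σ = true).sup
        fun σ => (F.attach.filter fun c => σ (Sum.inr c) = true).card) := by
  have hiff : ∀ σ : (X ⊕ {C // C ∈ F}) → Bool,
      D.eval σ = true ↔ CnfSat σ (tildeCnf F) := by
    intro σ
    constructor
    · exact hDF σ
    · intro hsat
      by_contra hne
      have hf : D.eval σ = false := by
        cases h : D.eval σ with
        | false => rfl
        | true => exact absurd h hne
      obtain ⟨P, hc, C, he⟩ := exists_false_path D σ hf
      have hCmem : C ∈ tildeCnf F := hsub (endClause_mem P he)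
      exact hcor σ P C hc he (hsat C hCmem)
  refine ⟨hiff, ?_⟩
  unfold maxSatVal
  apply le_antisymm
  · -- maxSatVal ≤ sup
    apply Finset.sup_le
    intro τ _
    set σ : (X ⊕ {C // C ∈ F}) → Bool :=
      Sum.elim τ (fun c => decide (ClauseSat τ c.1)) with hσ
    have hsat : CnfSat σ (tildeCnf F) := by
      intro C' hC'
      simp only [tildeCnf, Finset.mem_image] at hC'
      obtain ⟨c, hc, rfl⟩ := hC'
      by_cases h : ClauseSat τ c.1
      · obtain ⟨l, hl, hτ⟩ := h
        refine ⟨(Sum.inl l.1, l.2), ?_, ?_⟩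
        · exact Finset.mem_union_left _ (Finset.mem_image.2 ⟨l, hl, rfl⟩)
        · simpa [hσ] using hτ
      · refine ⟨(Sum.inr ⟨c.1, c.2⟩, false), ?_, ?_⟩
        · exact Finset.mem_union_right _ (Finset.mem_singleton_self _)
        · simp [hσ, h]
    have heval : D.eval σ = true := (hiff σ).2 hsat
    have hmem : σ ∈ Finset.univ.filter
        (fun σ : (X ⊕ {C // C ∈ F}) → Bool => D.eval σ = true) := by
      simp [heval]
    have hcard : (F.filter fun C => ClauseSat τ C).card =
        (F.attach.filter fun c => σ (Sum.inr c) = true).card := by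
      apply Finset.card_bij (fun C hC => (⟨C, (Finset.mem_filter.1 hC).1⟩ :
        {C // C ∈ F}))
      · intro C hC
        have := (Finset.mem_filter.1 hC).2
        simp [hσ, Finset.mem_filter, this]
      · intro a ha b hb hab
        simpa using congrArg Subtype.val hab
      · intro c hc
        have h2 := (Finset.mem_filter.1 hc).2
        have : ClauseSat τ c.1 := by simpa [hσ] using h2
        exact ⟨c.1, Finset.mem_filter.2 ⟨c.2, this⟩, rfl⟩
    rw [hcard]
    exact Finset.le_sup (f := fun σ => (F.attach.filter fun c => σ (Sum.inr c) = true).card) hmem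
  · -- sup ≤ maxSatVal
    apply Finset.sup_le
    intro σ hσmem
    have heval : D.eval σ = true := (Finset.mem_filter.1 hσmem).2
    have hsat : CnfSat σ (tildeCnf F) := hDF σ heval
    set τ : X → Bool := fun x => σ (Sum.inl x) with hτ
    have key : ∀ c : {C // C ∈ F}, σ (Sum.inr c) = true → ClauseSat τ c.1 := by
      intro c hc
      have hCmem : liftClause F c.1 c.2 ∈ tildeCnf F :=
        Finset.mem_image.2 ⟨c, F.mem_attach c, rfl⟩
      obtain ⟨l, hl, hτl⟩ := hsat _ hCmem
      rcases Finset.mem_union.1 hl with hl | hl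
      · obtain ⟨a, ha, rfl⟩ := Finset.mem_image.1 hl
        exact ⟨a, ha, hτl⟩
      · have := Finset.mem_singleton.1 hl
        subst this
        simp only at hτl
        rw [hc] at hτl
        exact absurd hτl (by simp)
    have hcard : (F.attach.filter fun c => σ (Sum.inr c) = true).card ≤
        (F.filter fun C => ClauseSat τ C).card := by
      apply Finset.card_le_card_of_injOn (fun c => c.1)
      · intro c hc
        have := (Finset.mem_filter.1 hc).2
        exact Finset.mem_filter.2 ⟨c.2, key c this⟩
      · intro a _ b _ hab
        exact Subtype.ext hab
    exact hcard.trans (Finset.le_sup (f := fun τ => (F.filter fun C => ClauseSat τ C).card) (Finset.mem_univ τ))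
end

section
/- If every 0-sink of a correct certified dec-DNNF D is labeled by a clause C with F ⇒ C (each such clause is entailed by the CNF F), and D ⇒ F, then D and F compute the same Boolean function. -/
lemma eval_false_path {X : Type} [DecidableEq X] (D : CDNNF X) (τ : X → Bool)
    (h : D.eval τ = false) :
    ∃ P : CPath D, P.compat τ ∧ ∃ C ∈ D.zeroClauses, P.endClause = some C := by
  induction D with
  | one => simp [CDNNF.eval] at h
  | zero C => exact ⟨.zero C, trivial, C, by simp [CDNNF.zeroClauses], rfl⟩
  | node x f0 f1 ih0 ih1 =>
      simp [CDNNF.eval] at h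
      cases hx : τ x with
      | false =>
          obtain ⟨P, hc, C, hC, he⟩ := ih0 (by simpa [hx] using h)
          exact ⟨.dec0 P, ⟨hx, hc⟩, C, by simp [CDNNF.zeroClauses, hC], he⟩
      | true =>
          obtain ⟨P, hc, C, hC, he⟩ := ih1 (by simpa [hx] using h)
          exact ⟨.dec1 P, ⟨hx, hc⟩, C, by simp [CDNNF.zeroClauses, hC], he⟩
  | conj f g ihf ihg =>
      rw [CDNNF.eval, Bool.and_eq_false_iff] at h
      rcases h with h | h
      · obtain ⟨P, hc, C, hC, he⟩ := ihf h
        exact ⟨.left P, hc, C, by simp [CDNNF.zeroClauses, hC], he⟩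
      · obtain ⟨P, hc, C, hC, he⟩ := ihg h
        exact ⟨.right P, hc, C, by simp [CDNNF.zeroClauses, hC], he⟩

/-- if every 0-sink clause of a correct certified dec-DNNF `D` is
entailed by the CNF `F`, and `D ⇒ F`, then `D` and `F` compute the same Boolean
function. -/
theorem stmt19 {X : Type} [DecidableEq X]
    (F : Finset (Finset (X × Bool))) (D : CDNNF X)
    (hcor : D.Correct)
    (hent : ∀ C ∈ D.zeroClauses, ∀ τ : X → Bool, CnfSat τ F → ClauseSat τ C)
    (hDF : ∀ τ : X → Bool, D.eval τ = true → CnfSat τ F) :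
    ∀ τ : X → Bool, D.eval τ = true ↔ CnfSat τ F := by
  intro τ
  constructor
  · exact hDF τ
  · intro hF
    by_contra h
    rw [Bool.not_eq_true] at h
    obtain ⟨P, hc, C, hC, he⟩ := eval_false_path D τ h
    exact hcor τ P C hc he (hent C hC τ hF)
end
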